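/- Let E and V be Lie algebras over a field K and let ρ : E → Der(V) be a coherent representation of E on V by derivations, i.e., [ρ(x)(v), w]_V = 0 for all x ∈ E and v, w ∈ V. Let T : V → E be a strict non-abelian embedding tensor, i.e., a linear map satisfying [T u, T v]_E = T(ρ(T u)(v) + [u, v]_V) for all u, v ∈ V. Then the bilinear operation on V defined by u ∘ v := ρ(T u)(v) + [u, v]_V satisfies the left Leibniz identity (the descendent Leibniz algebra structure on V), and moreover T(u ∘ v) = [T u, T v]_E for all u, v ∈ V, so T is a morphism from the descendent Leibniz algebra (V, ∘) to E. -/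
import Mathlib


/-- The descendent bracket on `V` induced by an embedding tensor `T` with respect to a
representation by derivations `ρ`. -/
def descendentCirc {K E V : Type*} [Field K] [LieRing E] [LieAlgebra K E]
    [LieRing V] [LieAlgebra K V]
    (ρ : E →ₗ⁅K⁆ LieDerivation K V V) (T : V →ₗ[K] E) (u v : V) : V :=
  ρ (T u) v + ⁅u, v⁆

/-- A strict non-abelian embedding tensor with respect to a coherent
representation induces a left Leibniz bracket on `V`, and `T` is a morphism from the
descendent Leibniz algebra to `E`. -/
theorem nonabelian_embedding_tensor_descendent
    (K : Type*) [Field K] (E V : Type*) [LieRing E] [LieAlgebra K E]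
    [LieRing V] [LieAlgebra K V]
    (ρ : E →ₗ⁅K⁆ LieDerivation K V V)
    (hcoh : ∀ (x : E) (v w : V), ⁅(ρ x v : V), w⁆ = 0)
    (T : V →ₗ[K] E)
    (hT : ∀ u v : V, ⁅T u, T v⁆ = T (ρ (T u) v + ⁅u, v⁆)) :
    (∀ u v w : V,
        descendentCirc ρ T u (descendentCirc ρ T v w)
          = descendentCirc ρ T (descendentCirc ρ T u v) w
            + descendentCirc ρ T v (descendentCirc ρ T u w)) ∧
    (∀ u v : V, T (descendentCirc ρ T u v) = ⁅T u, T v⁆) := by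
  have hcoh' : ∀ (x : E) (v w : V), ⁅w, (ρ x v : V)⁆ = 0 := by
    intro x v w
    rw [← lie_skew, hcoh, neg_zero]
  have hzero : ∀ (x : E) (a b : V), (ρ x) ⁅a, b⁆ = 0 := by
    intro x a b
    rw [LieDerivation.apply_lie_eq_add, hcoh, hcoh', add_zero]
  constructor
  · intro u v w
    simp only [descendentCirc]
    rw [← hT u v, LieHom.map_lie]
    simp only [map_add, lie_add, add_lie]
    rw [show (⁅ρ (T u), ρ (T v)⁆ : LieDerivation K V V) w
        = ρ (T u) (ρ (T v) w) - ρ (T v) (ρ (T u) w) from rfl]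
    simp only [hzero, hcoh, hcoh']
    rw [leibniz_lie u v w]
    abel
  · intro u v
    rw [descendentCirc, hT]
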